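/- Fix n ≥ 1. Let Π_n be the lattice of set partitions of {1, …, n}, ordered by refinement (x ≤ y iff every block of x is contained in a block of y), with join ∨, and for x ∈ Π_n let |x| denote the number of blocks of x. Let S(n,k) be the Stirling number of the second kind (the number of set partitions of {1,…,n} into exactly k blocks). Then the |Π_n|×|Π_n| matrix (q^{|x∨y|})_{x,y ∈ Π_n}, with rows and columns indexed by Π_n in any fixed order, has SSNF over ℤ[q] equal to the diagonal matrix whose diagonal entries are, in order, q repeated S(n,1) times, q(q−1) repeated S(n,2) times, …, q(q−1)⋯(q−n+1) repeated S(n,n) times. -/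

import Mathlib

/-!
Write `Z x y = [x ≤ y]` for the zeta matrix of `Π_n` and `D = diag((q)_{|y|})` with
`(q)_k = q(q-1)⋯(q-k+1)`. Sorting the `q`-colourings of the blocks of `z` by the partition
they induce gives `q^{|z|} = ∑_{w ≥ z} (q)_{|w|}`, first for `q ∈ ℕ` and then in `ℤ[q]`;
with `z = x ⊔ y` this says that the Gram matrix is `Z D Zᵀ`. Coarsening strictly decreases
the number of blocks, so `Z` is unitriangular once its columns are listed by increasing
number of blocks; hence `det Z = ±1` and `Z⁻¹`, corrected by a sign, transforms the Gram
matrix into `D`.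
-/

/-- `A` has special Smith normal form `diag d` over `R`: `P * A * Q = diagonal d` for some
`P, Q` of determinant `1`, and `d j ∣ d i` whenever `j ≤ i`. -/
def HasSSNF {R : Type*} [CommRing R] {n : ℕ} (A : Matrix (Fin n) (Fin n) R) (d : Fin n → R) :
    Prop :=
  (∃ P Q : Matrix (Fin n) (Fin n) R, P.det = 1 ∧ Q.det = 1 ∧ P * A * Q = Matrix.diagonal d) ∧
  ∀ i j : Fin n, j ≤ i → d j ∣ d i

/-- The number of blocks of a set partition of `Fin n`, a set partition being identified
with the setoid (equivalence relation) whose classes are its blocks. The lattice order on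
`Setoid (Fin n)` is refinement, as in the partition lattice `Π_n`. -/
noncomputable def numBlocks {n : ℕ} (x : Setoid (Fin n)) : ℕ := Nat.card (Quotient x)

/-- The Stirling number of the second kind `S(n,k)`: the number of set partitions of
`{1,…,n}` into exactly `k` blocks. -/
noncomputable def stirling2 (n k : ℕ) : ℕ := Nat.card {x : Setoid (Fin n) // numBlocks x = k}

open Finset Polynomial Matrix

namespace Setoid

variable {α : Type*}

theorem card_quotient_lt_of_lt [Finite α] {s t : Setoid α} (h : s < t) :
    Nat.card (Quotient t) < Nat.card (Quotient s) := by
  have hsurj : Function.Surjective (map_of_le h.le) := Quotient.ind fun a => ⟨⟦a⟧, rfl⟩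
  refine (Nat.card_le_card_of_surjective _ hsurj).lt_of_ne fun hcard => h.not_ge fun a b hab => ?_
  exact Quotient.exact ((hsurj.bijective_of_nat_card_le hcard.ge).1 (Quotient.sound hab))

def kerEquivEmbedding {β : Type*} {z w : Setoid α} (h : z ≤ w) :
    {g : Quotient z → β // ker (g ∘ Quotient.mk z) = w} ≃ (Quotient w ↪ β) where
  toFun g := ⟨Quotient.lift (s := w) (g.1 ∘ Quotient.mk z) fun _ _ hab => by rwa [← g.2] at hab,
    Quotient.ind₂ fun _ _ hab => Quotient.sound (by rw [← g.2]; exact ker_def.mpr hab)⟩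
  invFun e := ⟨e ∘ map_of_le h, Setoid.ext fun _ _ => ker_def.trans
    ⟨fun hab => Quotient.exact (e.injective hab), fun hab => congrArg e (Quotient.sound hab)⟩⟩
  left_inv g := Subtype.ext (funext (Quotient.ind fun _ => rfl))
  right_inv e := Function.Embedding.ext (Quotient.ind fun _ => rfl)

open scoped Classical in
theorem card_pow_card_quotient_eq_sum [Finite α] [Fintype (Setoid α)] (β : Type*) [Finite β]
    (z : Setoid α) :
    Nat.card β ^ Nat.card (Quotient z) =
      ∑ w : Setoid α, if z ≤ w then (Nat.card β).descFactorial (Nat.card (Quotient w)) else 0 := by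
  rw [← Nat.card_fun, ← Nat.card_congr (Equiv.sigmaFiberEquiv fun g : Quotient z → β =>
    ker (g ∘ Quotient.mk z)), Nat.card_sigma]
  refine Finset.sum_congr rfl fun w _ => ?_
  split_ifs with h
  · have := Fintype.ofFinite β
    have := Fintype.ofFinite (Quotient w)
    rw [Nat.card_congr (kerEquivEmbedding h), Nat.card_eq_fintype_card,
      Fintype.card_embedding_eq, Nat.card_eq_fintype_card, Nat.card_eq_fintype_card]
  · refine @Nat.card_of_isEmpty _ ⟨fun g => h ?_⟩
    rw [← g.2]
    exact fun a b hab => ker_def.mpr (congrArg g.1 (Quotient.sound hab))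

open scoped Classical in
theorem X_pow_card_quotient_eq_sum {R : Type*} [CommRing R] [IsDomain R] [CharZero R]
    [Finite α] [Fintype (Setoid α)] (z : Setoid α) :
    (X : R[X]) ^ Nat.card (Quotient z) =
      ∑ w : Setoid α, if z ≤ w then descPochhammer R (Nat.card (Quotient w)) else 0 := by
  refine eq_of_infinite_eval_eq _ _ (Set.infinite_of_injective_forall_mem
    Nat.cast_injective fun q : ℕ => ?_)
  have := congrArg (Nat.cast : ℕ → R) (card_pow_card_quotient_eq_sum (Fin q) z)
  push_cast [Nat.card_eq_fintype_card, Fintype.card_fin, Nat.cast_ite] at this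
  simp [eval_finsetSum, apply_ite (eval (q : R)), descPochhammer_eval_eq_descFactorial, this]

end Setoid

section ZetaMatrix

variable (R : Type*) {ι κ α : Type*}

def zetaMatrix [Zero R] [One R] [LE α] [DecidableLE α] (σ : ι → α) (π : κ → α) : Matrix ι κ R :=
  of fun i k => if σ i ≤ π k then 1 else 0

variable {R} [CommRing R]

theorem zetaMatrix_mul_diagonal_mul_transpose_apply [SemilatticeSup α] [DecidableLE α]
    [Fintype κ] [DecidableEq κ] (σ : ι → α) (π : κ → α) (d : κ → R) (i j : ι) :
    (zetaMatrix R σ π * diagonal d * (zetaMatrix R σ π)ᵀ) i j =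
      ∑ k, if σ i ⊔ σ j ≤ π k then d k else 0 := by
  rw [mul_apply]
  refine Finset.sum_congr rfl fun k _ => ?_
  simp only [mul_diagonal, transpose_apply, zetaMatrix, of_apply, sup_le_iff]
  split_ifs <;> simp_all

variable [Fintype ι] [DecidableEq ι] [LinearOrder ι] [PartialOrder α] [DecidableLE α]

theorem det_zetaMatrix_of_strictAnti {β : Type*} [Preorder β] (π : ι ≃ α) {f : α → β}
    (hf : StrictAnti f) (hπ : Monotone (f ∘ π)) : (zetaMatrix R π π).det = 1 := by
  have hlower : (zetaMatrix R π π).IsLowerTriangular := fun i j (hij : i < j) => by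
    refine if_neg fun hle => ?_
    exact (hπ hij.le).not_gt (hf (hle.lt_of_ne (π.injective.ne hij.ne)))
  rw [det_of_isLowerTriangular _ hlower]
  exact Finset.prod_eq_one fun i _ => if_pos le_rfl

theorem det_zetaMatrix_mul_self_of_strictAnti {β : Type*} [Preorder β] (σ π : ι ≃ α) {f : α → β}
    (hf : StrictAnti f) (hπ : Monotone (f ∘ π)) :
    (zetaMatrix R σ π).det * (zetaMatrix R σ π).det = 1 := by
  have hperm : zetaMatrix R σ π = (zetaMatrix R π π).submatrix (σ.trans π.symm) id := by
    ext i k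
    simp [zetaMatrix]
  rw [hperm, det_permute, det_zetaMatrix_of_strictAnti π hf hπ, mul_one, ← Int.cast_mul,
    ← Units.val_mul, Int.units_mul_self, Units.val_one, Int.cast_one]

end ZetaMatrix

theorem Matrix.exists_det_eq_one_mul_mul_transpose_eq_diagonal {R ι : Type*} [CommRing R]
    [Fintype ι] [DecidableEq ι] (Z : Matrix ι ι R) (d : ι → R) (hZ : Z.det * Z.det = 1) :
    ∃ P Q : Matrix ι ι R, P.det = 1 ∧ Q.det = 1 ∧ P * (Z * diagonal d * Zᵀ) * Q = diagonal d := by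
  obtain hι | hι := isEmpty_or_nonempty ι
  · exact ⟨1, 1, det_isEmpty, det_isEmpty, Subsingleton.elim _ _⟩
  obtain ⟨i₀⟩ := hι
  have hZinv : Z⁻¹ * Z = 1 := nonsing_inv_mul Z (IsUnit.of_mul_eq_one _ hZ)
  have hdet_inv : Z⁻¹.det = Z.det := by
    calc Z⁻¹.det = (Z⁻¹ * Z).det * Z.det := by rw [det_mul, mul_assoc, hZ, mul_one]
      _ = Z.det := by rw [hZinv, det_one, one_mul]
  -- Since `det Z` is its own inverse, scaling one row of `Z⁻¹` and the matching column of
  -- `Z⁻ᵀ` by it fixes both determinants without changing `diagonal d`.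
  set ε : ι → R := Function.update 1 i₀ Z.det
  have hε : ∀ i, ε i * ε i = 1 := fun i => by
    rcases eq_or_ne i i₀ with rfl | hi
    · simpa [ε] using hZ
    · simp [ε, hi]
  have hprod : ∏ i, ε i = Z.det := by simp [ε, Finset.prod_update_of_mem]
  refine ⟨diagonal ε * Z⁻¹, Z⁻¹ᵀ * diagonal ε, ?_, ?_, ?_⟩
  · rw [det_mul, det_diagonal, hprod, hdet_inv, hZ]
  · rw [det_mul, det_transpose, det_diagonal, hprod, hdet_inv, hZ]
  · calc diagonal ε * Z⁻¹ * (Z * diagonal d * Zᵀ) * (Z⁻¹ᵀ * diagonal ε)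
        = diagonal ε * (Z⁻¹ * Z * diagonal d * (Z⁻¹ * Z)ᵀ) * diagonal ε := by
          simp only [transpose_mul, Matrix.mul_assoc]
      _ = diagonal d := by
          rw [hZinv, transpose_one, Matrix.one_mul, Matrix.mul_one, diagonal_mul_diagonal,
            diagonal_mul_diagonal]
          congr 1
          funext i
          rw [mul_comm, ← mul_assoc, hε, one_mul]

theorem descPochhammer_eq_prod_range (R : Type*) [CommRing R] (k : ℕ) :
    descPochhammer R k = ∏ t ∈ range k, (X - C (t : R)) := by
  induction k with
  | zero => simp
  | succ k ih => simp [descPochhammer_succ_right, prod_range_succ, ih]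

theorem numBlocks_strictAnti (n : ℕ) : StrictAnti (numBlocks (n := n)) :=
  fun _ _ h => Setoid.card_quotient_lt_of_lt h

theorem partition_lattice_gram_SSNF_general (n : ℕ)
    (N : ℕ) (ρ : Fin N ≃ Setoid (Fin n)) :
    ∃ π : Fin N ≃ Setoid (Fin n),
      Monotone (fun i => numBlocks (π i)) ∧
      (∀ k : ℕ, (Finset.univ.filter fun i : Fin N => numBlocks (π i) = k).card
        = stirling2 n k) ∧
      HasSSNF (fun i j : Fin N => Polynomial.X ^ numBlocks (ρ i ⊔ ρ j))
        (fun i => ∏ t ∈ Finset.range (numBlocks (π i)),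
          (Polynomial.X - Polynomial.C (t : ℤ))) := by
  classical
  have : Fintype (Setoid (Fin n)) := Fintype.ofEquiv _ ρ
  set π := (Tuple.sort (numBlocks ∘ ρ)).trans ρ
  have hπ : Monotone (numBlocks ∘ π) := Tuple.monotone_sort (numBlocks ∘ ρ)
  refine ⟨π, hπ, fun k => ?_, ⟨?_, fun i j hij => ?_⟩⟩
  · rw [stirling2, ← Nat.card_congr (π.subtypeEquiv fun _ => Iff.rfl), Nat.card_eq_fintype_card,
      Fintype.card_subtype]
  · have hgram : (of fun i j => (X : ℤ[X]) ^ numBlocks (ρ i ⊔ ρ j)) =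
        zetaMatrix ℤ[X] ρ π * diagonal (fun k => descPochhammer ℤ (numBlocks (π k))) *
          (zetaMatrix ℤ[X] ρ π)ᵀ := by
      ext i j
      rw [zetaMatrix_mul_diagonal_mul_transpose_apply, of_apply, numBlocks,
        Setoid.X_pow_card_quotient_eq_sum, ← π.sum_comp]
      rfl
    simp only [← descPochhammer_eq_prod_range]
    rw [show (fun i j => (X : ℤ[X]) ^ numBlocks (ρ i ⊔ ρ j)) = _ from hgram]
    exact exists_det_eq_one_mul_mul_transpose_eq_diagonal _ _
      (det_zetaMatrix_mul_self_of_strictAnti ρ π (numBlocks_strictAnti n) hπ)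
  · exact prod_dvd_prod_of_subset _ _ _ (range_subset_range.2 (hπ hij))

/-- For `n ≥ 1`, the matrix `(q^{|x ⊔ y|})_{x,y ∈ Π_n}`, with rows and
columns indexed by the partition lattice `Π_n = Setoid (Fin n)` in any fixed order `ρ`, has
SSNF over `ℤ[q]` the diagonal matrix whose entries, read along an enumeration `π` of `Π_n`
with a nondecreasing number of blocks, are `∏_{t=0}^{|π i|-1} (q - t)`, i.e. `q` repeated
`S(n,1)` times, `q(q-1)` repeated `S(n,2)` times, …, `q(q-1)⋯(q-n+1)` repeated `S(n,n)`
times. -/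
theorem partition_lattice_gram_SSNF (n : ℕ) (hn : 1 ≤ n)
    (N : ℕ) (ρ : Fin N ≃ Setoid (Fin n)) :
    ∃ π : Fin N ≃ Setoid (Fin n),
      Monotone (fun i => numBlocks (π i)) ∧
      (∀ k : ℕ, (Finset.univ.filter fun i : Fin N => numBlocks (π i) = k).card
        = stirling2 n k) ∧
      HasSSNF (fun i j : Fin N => Polynomial.X ^ numBlocks (ρ i ⊔ ρ j))
        (fun i => ∏ t ∈ Finset.range (numBlocks (π i)),
          (Polynomial.X - Polynomial.C (t : ℤ))) :=
  partition_lattice_gram_SSNF_general n N ρ
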